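/- arXiv:1805.11029 — 5 statements merged into one kernel-verified Lean document; each statement's English description precedes it below -/
import Mathlib

section
/- For all integers n ≥ 0, 0 < p ≤ 1, q = 1 - p, and 0 < a < 1, we have ∑_{k=0}^{n} (1/(k+1)^a) · C(n,k) p^k q^{n-k} ≤ (1/p) · (1 - q^{n+1})/(n+1)^a. -/
/-!
For `k ≤ n` the ratio `(n + 1) / (k + 1)` is at least `1`, so its `a`-th power with `a ≤ 1` is at most itself:
the weight `1 / (k + 1) ^ a` is at most `((n + 1) / (k + 1)) / (n + 1) ^ a`.
The binomial sum with weights `(n + 1) / (k + 1)` is explicit: `(n + 1) / (k + 1) * C(n, k) = C(n + 1, k + 1)`,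
so `p` times it is the binomial expansion of `(p + q) ^ (n + 1)` without its `k = 0` term `q ^ (n + 1)`.
-/

open Finset

theorem add_pow_succ_eq_sum_choose_succ_add {R : Type*} [CommSemiring R] (x y : R) (n : ℕ) :
    (x + y) ^ (n + 1) =
      ∑ k ∈ range (n + 1), ((n + 1).choose (k + 1) : R) * x ^ (k + 1) * y ^ (n - k) + y ^ (n + 1) := by
  rw [add_pow, sum_range_succ']
  simp only [Nat.choose_zero_right, Nat.cast_one, pow_zero, mul_one, one_mul, Nat.sub_zero]
  congr 1
  exact sum_congr rfl fun k _ => by rw [Nat.succ_sub_succ]; ring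

theorem mul_sum_div_succ_mul_choose {K : Type*} [Field K] [CharZero K] (x y : K) (n : ℕ) :
    x * ∑ k ∈ range (n + 1), ((n : K) + 1) / ((k : K) + 1) * (n.choose k : K) * x ^ k * y ^ (n - k) =
      (x + y) ^ (n + 1) - y ^ (n + 1) := by
  rw [add_pow_succ_eq_sum_choose_succ_add, add_sub_cancel_right, mul_sum]
  refine sum_congr rfl fun k _ => ?_
  have hchoose : ((n : K) + 1) * (n.choose k : K) = ((n + 1).choose (k + 1) : K) * ((k : K) + 1) := by
    exact_mod_cast Nat.add_one_mul_choose_eq n k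
  field_simp
  linear_combination x ^ (k + 1) * y ^ (n - k) * hchoose

theorem one_div_rpow_le_div_div_rpow {x y a : ℝ} (hx : 0 < x) (hxy : x ≤ y) (ha : a ≤ 1) :
    1 / x ^ a ≤ y / x / y ^ a := by
  have hy : 0 < y := hx.trans_le hxy
  have hratio : (y / x) ^ a ≤ y / x := by
    simpa using Real.rpow_le_rpow_of_exponent_le ((one_le_div hx).mpr hxy) ha
  rw [Real.div_rpow hy.le hx.le] at hratio
  calc 1 / x ^ a = y ^ a / x ^ a / y ^ a := by field_simp
    _ ≤ y / x / y ^ a := by gcongr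

theorem stmt_0_general (n : ℕ) (p a : ℝ) (hp : 0 < p) (hp1 : p ≤ 1) (ha1 : a < 1) :
    ∑ k ∈ range (n + 1),
        (1 / ((k : ℝ) + 1) ^ a) * (n.choose k : ℝ) * p ^ k * (1 - p) ^ (n - k)
      ≤ (1 / p) * (1 - (1 - p) ^ (n + 1)) / ((n : ℝ) + 1) ^ a := by
  have hq : 0 ≤ 1 - p := sub_nonneg.mpr hp1
  have hsum := mul_sum_div_succ_mul_choose p (1 - p) n
  rw [add_sub_cancel, one_pow] at hsum
  calc ∑ k ∈ range (n + 1), (1 / ((k : ℝ) + 1) ^ a) * (n.choose k : ℝ) * p ^ k * (1 - p) ^ (n - k)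
      ≤ ∑ k ∈ range (n + 1),
          ((n : ℝ) + 1) / ((k : ℝ) + 1) / ((n : ℝ) + 1) ^ a * (n.choose k : ℝ) * p ^ k * (1 - p) ^ (n - k) := by
        refine sum_le_sum fun k hk => ?_
        have hkn : (k : ℝ) ≤ n := by exact_mod_cast Nat.lt_succ_iff.mp (mem_range.mp hk)
        gcongr ?_ * _ * _ * _
        exact one_div_rpow_le_div_div_rpow (by positivity) (by linarith) ha1.le
    _ = (p * ∑ k ∈ range (n + 1),
          ((n : ℝ) + 1) / ((k : ℝ) + 1) * (n.choose k : ℝ) * p ^ k * (1 - p) ^ (n - k)) /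
          p / ((n : ℝ) + 1) ^ a := by
        rw [mul_div_cancel_left₀ _ hp.ne', sum_div]
        refine sum_congr rfl fun k _ => by ring
    _ = (1 / p) * (1 - (1 - p) ^ (n + 1)) / ((n : ℝ) + 1) ^ a := by
        rw [hsum]
        ring

theorem stmt_0 (n : ℕ) (p a : ℝ) (hp : 0 < p) (hp1 : p ≤ 1) (ha : 0 < a) (ha1 : a < 1) :
    ∑ k ∈ range (n + 1),
        (1 / ((k : ℝ) + 1) ^ a) * (n.choose k : ℝ) * p ^ k * (1 - p) ^ (n - k)
      ≤ (1 / p) * (1 - (1 - p) ^ (n + 1)) / ((n : ℝ) + 1) ^ a :=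
  stmt_0_general n p a hp hp1 ha1
end

section
/- For every real x with 0 ≤ x ≤ 1 and every nonnegative integer k, log₂(1 + k·x) ≥ log₂(1 + k) · log₂(1 + x). -/
/-!
Put `t = log₂ (1 + x) ∈ [0, 1]`, so that `2 ^ t = 1 + x`. Taking `2 ^ ·` of both sides, the claim
becomes `(1 + k) ^ t ≤ 1 + k (2 ^ t - 1)`. For `k ≥ 1` this says that the secant slope of the
concave function `s ↦ s ^ t` from `1` to `1 + k` is at most the one from `1` to `2`.
-/

open Real

theorem ConcaveOn.sub_le_mul_sub {s : Set ℝ} {f : ℝ → ℝ} (hf : ConcaveOn ℝ s f) {a K : ℝ}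
    (ha : a ∈ s) (haK : a + K ∈ s) (hK : 1 ≤ K) :
    f (a + K) - f a ≤ K * (f (a + 1) - f a) := by
  rcases hK.eq_or_lt with rfl | hK
  · simp
  have hslope := hf.slope_anti_adjacent ha haK (lt_add_one a) (by linarith)
  rw [add_sub_add_left_eq_sub, add_sub_cancel_left, div_one,
    div_le_iff₀ (by linarith)] at hslope
  linarith

theorem Real.one_add_rpow_le {t K : ℝ} (ht0 : 0 ≤ t) (ht1 : t ≤ 1) (hK : 1 ≤ K) :
    (1 + K) ^ t ≤ 1 + K * (2 ^ t - 1) := by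
  have h := (concaveOn_rpow ht0 ht1).sub_le_mul_sub (a := 1) (by norm_num)
    (by simp only [Set.mem_Ici]; linarith) hK
  norm_num at h
  linarith

theorem stmt_3 (x : ℝ) (hx0 : 0 ≤ x) (hx1 : x ≤ 1) (k : ℕ) :
    Real.logb 2 (1 + (k : ℝ) * x) ≥ Real.logb 2 (1 + (k : ℝ)) * Real.logb 2 (1 + x) := by
  rcases Nat.eq_zero_or_pos k with rfl | hk
  · simp
  set t := logb 2 (1 + x)
  have ht0 : 0 ≤ t := logb_nonneg one_lt_two (by linarith)
  have ht1 : t ≤ 1 := by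
    rw [logb_le_iff_le_rpow one_lt_two (by linarith)]
    norm_num; linarith
  have h2t : (2 : ℝ) ^ t = 1 + x := rpow_logb two_pos (by norm_num) (by linarith)
  rw [ge_iff_le, le_logb_iff_rpow_le one_lt_two (by positivity), rpow_mul zero_le_two,
    rpow_logb two_pos (by norm_num) (by positivity)]
  calc (1 + (k : ℝ)) ^ t ≤ 1 + k * (2 ^ t - 1) := one_add_rpow_le ht0 ht1 (mod_cast hk)
    _ = 1 + k * x := by rw [h2t]; ring
end

section
/- For all integers n ≥ 0, StakRwd ≥ 2, 0 < p ≤ 1 with q = 1 - p, we have ∑_{k=0}^{n} (1/(log₂(k+1) + log₂ StakRwd)) · C(n,k) p^k q^{n-k} ≤ (1/p) · (1 - q^{n+1})/(log₂(n+1) + log₂ StakRwd). -/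
/-!
Since `C(n, k) / (k + 1) = C(n + 1, k + 1) / (n + 1)`, it suffices to bound each weight
`1 / (log₂ (k + 1) + L)`, where `L = log₂ StakRwd ≥ 1`, by
`((n + 1) / (k + 1)) / (log₂ (n + 1) + L)`: the reweighted sum
`∑ C(n + 1, k + 1) p^k q^(n - k)` is the binomial expansion of `(p + q)^(n + 1)` without its
term `q^(n + 1)`, divided by `p`.
The weight bound says that `(log₂ x + L) / x` decreases along `1 ≤ k + 1 ≤ n + 1`. For `k ≥ 1`
it follows from `log y - log x ≤ y / x - 1`, as `log₂ x + L ≥ 2 > 1 / log 2`;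
for `k = 0` it is `log₂ (n + 1) ≤ n ≤ n L`.
-/

open Finset

namespace Real

theorem mul_logb_add_le_mul_logb_add {b x y c : ℝ} (hb : 1 < b) (hx : 0 < x) (hxy : x ≤ y)
    (hc : 1 / log b ≤ logb b x + c) :
    x * (logb b y + c) ≤ y * (logb b x + c) := by
  have hlogb : 0 < log b := log_pos hb
  have hy : 0 < y := hx.trans_le hxy
  have hgap : x * (logb b y - logb b x) ≤ (y - x) * (1 / log b) := by
    rw [← logb_div hy.ne' hx.ne', logb, mul_one_div, mul_div_assoc',
      div_le_div_iff_of_pos_right hlogb]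
    calc x * log (y / x) ≤ x * (y / x - 1) :=
          mul_le_mul_of_nonneg_left (log_le_sub_one_of_pos (div_pos hy hx)) hx.le
      _ = y - x := by field_simp
  nlinarith [mul_le_mul_of_nonneg_left hc (sub_nonneg.2 hxy)]

theorem logb_two_natCast_add_one_le (n : ℕ) : logb 2 ((n : ℝ) + 1) ≤ n := by
  rw [logb_le_iff_le_rpow one_lt_two (by positivity), rpow_natCast]
  exact_mod_cast n.lt_two_pow_self

theorem add_one_mul_logb_two_add_le {k n : ℕ} {L : ℝ} (hkn : k ≤ n) (hL : 1 ≤ L) :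
    ((k : ℝ) + 1) * (logb 2 ((n : ℝ) + 1) + L)
      ≤ ((n : ℝ) + 1) * (logb 2 ((k : ℝ) + 1) + L) := by
  rcases k.eq_zero_or_pos with rfl | hk
  · have := logb_two_natCast_add_one_le n
    simp only [Nat.cast_zero, zero_add, logb_one]
    nlinarith [(n.cast_nonneg : (0 : ℝ) ≤ n)]
  · refine mul_logb_add_le_mul_logb_add one_lt_two (by positivity) (by gcongr) ?_
    have hk2 : 1 ≤ logb 2 ((k : ℝ) + 1) := by
      rw [le_logb_iff_rpow_le one_lt_two (by positivity), rpow_one]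
      exact_mod_cast Nat.succ_le_succ hk
    have : 1 / log 2 < 2 := by
      rw [div_lt_iff₀ (log_pos one_lt_two)]
      linarith [log_two_gt_d9]
    linarith

theorem choose_div_logb_two_add_le {k n : ℕ} {L : ℝ} (hkn : k ≤ n) (hL : 1 ≤ L) :
    (n.choose k : ℝ) / (logb 2 ((k : ℝ) + 1) + L)
      ≤ ((n + 1).choose (k + 1) : ℝ) / (logb 2 ((n : ℝ) + 1) + L) := by
  have hpos (m : ℕ) : 0 < logb 2 ((m : ℝ) + 1) + L := by
    have : 0 ≤ logb 2 ((m : ℝ) + 1) := logb_nonneg one_lt_two (by simp)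
    linarith
  have hchoose : ((n : ℝ) + 1) * n.choose k = (n + 1).choose (k + 1) * ((k : ℝ) + 1) := by
    exact_mod_cast Nat.add_one_mul_choose_eq n k
  rw [div_le_div_iff₀ (hpos k) (hpos n),
    ← mul_le_mul_iff_of_pos_left (by positivity : (0 : ℝ) < k + 1)]
  calc ((k : ℝ) + 1) * (n.choose k * (logb 2 ((n : ℝ) + 1) + L))
      = n.choose k * (((k : ℝ) + 1) * (logb 2 ((n : ℝ) + 1) + L)) := by ring
    _ ≤ n.choose k * (((n : ℝ) + 1) * (logb 2 ((k : ℝ) + 1) + L)) :=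
      mul_le_mul_of_nonneg_left (add_one_mul_logb_two_add_le hkn hL) (Nat.cast_nonneg _)
    _ = ((k : ℝ) + 1) * ((n + 1).choose (k + 1) * (logb 2 ((k : ℝ) + 1) + L)) := by
      linear_combination (logb 2 ((k : ℝ) + 1) + L) * hchoose

end Real

theorem mul_sum_choose_add_one_mul_pow_mul_pow {R : Type*} [CommRing R] (x y : R) (n : ℕ) :
    x * ∑ k ∈ range (n + 1), ((n + 1).choose (k + 1) : R) * x ^ k * y ^ (n - k)
      = (x + y) ^ (n + 1) - y ^ (n + 1) := by
  rw [add_pow, sum_range_succ' (fun m => x ^ m * y ^ (n + 1 - m) * ((n + 1).choose m : R)),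
    mul_sum]
  simp only [pow_zero, one_mul, Nat.sub_zero, Nat.choose_zero_right, Nat.cast_one, mul_one,
    Nat.add_sub_add_right, add_sub_cancel_right]
  exact sum_congr rfl fun k _ => by ring

theorem stmt_4 (n : ℕ) (StakRwd p : ℝ) (hS : 2 ≤ StakRwd) (hp : 0 < p) (hp1 : p ≤ 1) :
    ∑ k ∈ range (n + 1),
        (1 / (Real.logb 2 ((k : ℝ) + 1) + Real.logb 2 StakRwd)) * (n.choose k : ℝ) *
          p ^ k * (1 - p) ^ (n - k)
      ≤ (1 / p) * (1 - (1 - p) ^ (n + 1)) /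
          (Real.logb 2 ((n : ℝ) + 1) + Real.logb 2 StakRwd) := by
  set L := Real.logb 2 StakRwd
  have hL : 1 ≤ L := by
    rwa [Real.le_logb_iff_rpow_le one_lt_two (by linarith), Real.rpow_one]
  have hsum := mul_sum_choose_add_one_mul_pow_mul_pow p (1 - p) n
  rw [add_sub_cancel, one_pow] at hsum
  calc ∑ k ∈ range (n + 1),
        (1 / (Real.logb 2 ((k : ℝ) + 1) + L)) * (n.choose k : ℝ) * p ^ k * (1 - p) ^ (n - k)
      = ∑ k ∈ range (n + 1),
          (n.choose k : ℝ) / (Real.logb 2 ((k : ℝ) + 1) + L) * (p ^ k * (1 - p) ^ (n - k)) :=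
        sum_congr rfl fun k _ => by ring
    _ ≤ ∑ k ∈ range (n + 1),
          ((n + 1).choose (k + 1) : ℝ) / (Real.logb 2 ((n : ℝ) + 1) + L)
            * (p ^ k * (1 - p) ^ (n - k)) := by
        have hq : 0 ≤ 1 - p := by linarith
        exact sum_le_sum fun k hk => mul_le_mul_of_nonneg_right
          (Real.choose_div_logb_two_add_le (Nat.lt_succ_iff.1 (mem_range.1 hk)) hL) (by positivity)
    _ = (1 / p) * (1 - (1 - p) ^ (n + 1)) / (Real.logb 2 ((n : ℝ) + 1) + L) := by
        simp only [div_mul_eq_mul_div, ← sum_div, ← mul_assoc]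
        rw [← hsum]
        field_simp
end

section
/- Let 0 < p ≤ 1, q = 1 - p, 0 < a < 1, and let T(L) = ∑_{n=0}^{L-1} ∑_{k=0}^{n} (1/(k+1)^a) C(n,k) p^k q^{n-k}. Then T(L) ≤ (1/p) ∑_{n=0}^{L-1} (1 - q^{n+1})/(n+1)^a ≤ (1/p) ∑_{n=0}^{L-1} 1/(n+1)^a. -/
open Finset

/-!
Since `k + 1 ≤ n + 1` and `a ≤ 1`, `(k + 1)^(-a) ≤ (n + 1)^(1 - a) / (k + 1)`; the binomial
average of `1 / (k + 1)` has the closed form `(1 - q^(n+1)) / ((n + 1) p)`, which gives the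
first bound row by row. The second is `q^(n+1) ≥ 0`.
-/

/-- Absorption `(n + 1) C(n, k) = (k + 1) C(n + 1, k + 1)` turns the sum into the binomial
expansion of `(x + y) ^ (n + 1)` without its `k = 0` term. -/
theorem mul_sum_choose_mul_pow_div_succ {K : Type*} [Field K] [CharZero K] (x y : K) (n : ℕ) :
    (n + 1) * x * ∑ k ∈ range (n + 1), n.choose k * x ^ k * y ^ (n - k) / (k + 1)
      = (x + y) ^ (n + 1) - y ^ (n + 1) := by
  rw [add_pow, sum_range_succ' _ (n + 1), mul_sum]
  simp only [pow_zero, one_mul, Nat.sub_zero, Nat.choose_zero_right, Nat.cast_one, mul_one,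
    add_sub_cancel_right]
  refine sum_congr rfl fun k _ => ?_
  have absorb : ((n : K) + 1) * n.choose k = (n + 1).choose (k + 1) * ((k : K) + 1) := by
    exact_mod_cast Nat.add_one_mul_choose_eq n k
  have hk : (k : K) + 1 ≠ 0 := by exact_mod_cast k.succ_ne_zero
  rw [Nat.add_sub_add_right]
  field_simp
  linear_combination x ^ (k + 1) * y ^ (n - k) * absorb

theorem one_div_rpow_le_rpow_one_sub_div {x y a : ℝ} (hx : 0 < x) (hxy : x ≤ y) (ha : a ≤ 1) :
    1 / x ^ a ≤ y ^ (1 - a) / x := by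
  calc 1 / x ^ a = x ^ (1 - a) / x := by
        rw [Real.rpow_sub hx, Real.rpow_one]
        field_simp
    _ ≤ y ^ (1 - a) / x := by gcongr

theorem sum_binomial_div_rpow_succ_le {p a : ℝ} (hp : 0 < p) (hp1 : p ≤ 1) (ha1 : a ≤ 1) (n : ℕ) :
    ∑ k ∈ range (n + 1), (1 / ((k : ℝ) + 1) ^ a) * (n.choose k : ℝ) * p ^ k * (1 - p) ^ (n - k)
      ≤ 1 / p * ((1 - (1 - p) ^ (n + 1)) / ((n : ℝ) + 1) ^ a) := by
  have hn : (0 : ℝ) < n + 1 := by positivity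
  have hsum : ∑ k ∈ range (n + 1), (n.choose k : ℝ) * p ^ k * (1 - p) ^ (n - k) / (k + 1)
      = (1 - (1 - p) ^ (n + 1)) / ((n + 1) * p) := by
    rw [eq_div_iff (by positivity), mul_comm, mul_sum_choose_mul_pow_div_succ,
      add_sub_cancel, one_pow]
  calc ∑ k ∈ range (n + 1), (1 / ((k : ℝ) + 1) ^ a) * (n.choose k : ℝ) * p ^ k * (1 - p) ^ (n - k)
      ≤ ∑ k ∈ range (n + 1),
          ((n : ℝ) + 1) ^ (1 - a) / (k + 1) * ((n.choose k : ℝ) * p ^ k * (1 - p) ^ (n - k)) := by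
        refine sum_le_sum fun k hk => ?_
        have hkn : (k : ℝ) ≤ n := by exact_mod_cast Nat.lt_succ_iff.mp (mem_range.mp hk)
        have hq : 0 ≤ 1 - p := by linarith
        rw [mul_assoc, mul_assoc, ← mul_assoc (n.choose k : ℝ)]
        exact mul_le_mul_of_nonneg_right
          (one_div_rpow_le_rpow_one_sub_div (by positivity) (by linarith) ha1) (by positivity)
    _ = ((n : ℝ) + 1) ^ (1 - a) * ((1 - (1 - p) ^ (n + 1)) / ((n + 1) * p)) := by
        rw [← hsum, mul_sum]
        exact sum_congr rfl fun k _ => by ring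
    _ = 1 / p * ((1 - (1 - p) ^ (n + 1)) / ((n : ℝ) + 1) ^ a) := by
        rw [Real.rpow_sub hn, Real.rpow_one]
        field_simp

theorem stmt_14_general (p a : ℝ) (hp : 0 < p) (hp1 : p ≤ 1) (ha1 : a < 1) (L : ℕ) :
    (∑ n ∈ range L, ∑ k ∈ range (n + 1),
        (1 / ((k : ℝ) + 1) ^ a) * (n.choose k : ℝ) * p ^ k * (1 - p) ^ (n - k))
      ≤ (1 / p) * ∑ n ∈ range L, (1 - (1 - p) ^ (n + 1)) / ((n : ℝ) + 1) ^ a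
    ∧ (1 / p) * ∑ n ∈ range L, (1 - (1 - p) ^ (n + 1)) / ((n : ℝ) + 1) ^ a
      ≤ (1 / p) * ∑ n ∈ range L, 1 / ((n : ℝ) + 1) ^ a := by
  constructor
  · rw [mul_sum]
    exact sum_le_sum fun n _ => sum_binomial_div_rpow_succ_le hp hp1 ha1.le n
  · gcongr
    exact sub_le_self _ (pow_nonneg (by linarith) _)

theorem stmt_14 (p a : ℝ) (hp : 0 < p) (hp1 : p ≤ 1) (ha : 0 < a) (ha1 : a < 1) (L : ℕ) :
    (∑ n ∈ range L, ∑ k ∈ range (n + 1),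
        (1 / ((k : ℝ) + 1) ^ a) * (n.choose k : ℝ) * p ^ k * (1 - p) ^ (n - k))
      ≤ (1 / p) * ∑ n ∈ range L, (1 - (1 - p) ^ (n + 1)) / ((n : ℝ) + 1) ^ a
    ∧ (1 / p) * ∑ n ∈ range L, (1 - (1 - p) ^ (n + 1)) / ((n : ℝ) + 1) ^ a
      ≤ (1 / p) * ∑ n ∈ range L, 1 / ((n : ℝ) + 1) ^ a :=
  stmt_14_general p a hp hp1 ha1 L
end

section
/- For every integer k > m > 2 and reals S ≥ 2, 1 < c ≤ m/log₂(m+1): m·log₂ S + 2c·(log₂ m)·(log₂(k+m) - log₂ m) ≥ c·(log₂ S + log₂(k+1)). -/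
theorem stmt_17 (m k : ℕ) (hm : 2 < m) (hk : m < k) (S c : ℝ) (hS : 2 ≤ S)
    (hc1 : 1 < c) (hc2 : c ≤ (m : ℝ) / Real.logb 2 ((m : ℝ) + 1)) :
    c * (Real.logb 2 S + Real.logb 2 ((k : ℝ) + 1))
      ≤ (m : ℝ) * Real.logb 2 S +
          2 * c * Real.logb 2 (m : ℝ) *
            (Real.logb 2 ((k : ℝ) + (m : ℝ)) - Real.logb 2 (m : ℝ)) := by
  have h2 : (1:ℝ) < 2 := one_lt_two
  have hm3 : (3:ℝ) ≤ (m:ℝ) := by exact_mod_cast hm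
  have hk1 : (m:ℝ) < (k:ℝ) := by exact_mod_cast hk
  have hc0 : (0:ℝ) < c := by linarith
  have hlog2 : Real.logb 2 2 = 1 := Real.logb_self_eq_one h2
  -- logb 2 m ≥ 1
  have lm1 : 1 ≤ Real.logb 2 (m:ℝ) := by
    rw [← hlog2]; exact Real.logb_le_logb_of_le h2 two_pos (by linarith)
  -- logb 2 S ≥ 1
  have lS1 : 1 ≤ Real.logb 2 S := by
    rw [← hlog2]; exact Real.logb_le_logb_of_le h2 two_pos hS
  -- c ≤ m
  have hcm : c ≤ (m:ℝ) := by
    have h1 : 1 ≤ Real.logb 2 ((m:ℝ) + 1) := by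
      rw [← hlog2]; exact Real.logb_le_logb_of_le h2 two_pos (by linarith)
    calc c ≤ (m:ℝ) / Real.logb 2 ((m:ℝ) + 1) := hc2
      _ ≤ (m:ℝ) := div_le_self (by linarith) h1
  -- key inequality
  have key : Real.logb 2 ((k:ℝ) + 1) ≤
      2 * Real.logb 2 (m:ℝ) * (Real.logb 2 ((k:ℝ) + (m:ℝ)) - Real.logb 2 (m:ℝ)) := by
    have hsq : Real.logb 2 ((m:ℝ)^2) = 2 * Real.logb 2 (m:ℝ) := by
      rw [Real.logb_pow]; push_cast; ring
    by_cases h : (m:ℝ)^2 ≤ (k:ℝ)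
    · have A : 2 * Real.logb 2 (m:ℝ) ≤ Real.logb 2 ((k:ℝ) + (m:ℝ)) := by
        rw [← hsq]
        exact Real.logb_le_logb_of_le h2 (by positivity) (by linarith)
      have B : Real.logb 2 ((k:ℝ) + 1) ≤ Real.logb 2 ((k:ℝ) + (m:ℝ)) :=
        Real.logb_le_logb_of_le h2 (by linarith) (by linarith)
      nlinarith [mul_nonneg (sub_nonneg.mpr lm1) (sub_nonneg.mpr A),
        mul_nonneg (sub_nonneg.mpr lm1) (by linarith : (0:ℝ) ≤ Real.logb 2 ((k:ℝ)+(m:ℝ)))]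
    · push_neg at h
      have A : Real.logb 2 ((k:ℝ) + 1) ≤ 2 * Real.logb 2 (m:ℝ) := by
        rw [← hsq]
        refine Real.logb_le_logb_of_le h2 (by linarith) ?_
        have : k + 1 ≤ m^2 := by
          have : (k:ℝ) < (m:ℝ)^2 := h
          have : k < m^2 := by exact_mod_cast (by push_cast at this ⊢; exact this : (k:ℝ) < ((m^2 : ℕ) : ℝ))
          omega
        have := (Nat.cast_le (α := ℝ)).mpr this
        push_cast at this; linarith
      have B : 1 + Real.logb 2 (m:ℝ) ≤ Real.logb 2 ((k:ℝ) + (m:ℝ)) := by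
        have h2m : Real.logb 2 (2 * (m:ℝ)) = 1 + Real.logb 2 (m:ℝ) := by
          rw [Real.logb_mul (by norm_num) (by linarith), hlog2]
        rw [← h2m]
        exact Real.logb_le_logb_of_le h2 (by linarith) (by linarith)
      nlinarith [sub_nonneg.mpr lm1]
  nlinarith [mul_le_mul_of_nonneg_left key hc0.le]
end
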